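/- Let G be a countable amenable group, (X, x₀) a compact pointed G-space, and let S_{x₀} denote the Bebutov map. Then the adjoint map S_{x₀}* sends the set of left-invariant means on G onto the set of G-invariant Borel probability measures on X, and maps extreme left-invariant means to ergodic G-invariant measures. -/

import Mathlib

open scoped Classical BoundedContinuousFunction

/-- Left translation `t ↦ g⁻¹ * t` as a continuous map (G discrete). -/
def lTransMap (G : Type*) [Group G] [TopologicalSpace G] [DiscreteTopology G] (g : G) :
    C(G, G) := ⟨fun t => g⁻¹ * t, continuous_of_discreteTopology⟩

/-- The left translation action on ℓ∞(G): `(g · φ)(t) = φ(g⁻¹ t)`. -/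
noncomputable def lTrans (G : Type*) [Group G] [TopologicalSpace G] [DiscreteTopology G]
    (g : G) (f : G →ᵇ ℝ) : G →ᵇ ℝ := f.compContinuous (lTransMap G g)

/-- A mean on G: a positive unital linear functional on ℓ∞(G). -/
def IsMean (G : Type*) [Group G] [TopologicalSpace G] [DiscreteTopology G]
    (m : (G →ᵇ ℝ) →ₗ[ℝ] ℝ) : Prop :=
  m 1 = 1 ∧ ∀ f : G →ᵇ ℝ, 0 ≤ f → 0 ≤ m f

/-- A left-invariant mean on G. -/
def IsLeftInvariantMean (G : Type*) [Group G] [TopologicalSpace G] [DiscreteTopology G]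
    (m : (G →ᵇ ℝ) →ₗ[ℝ] ℝ) : Prop :=
  IsMean G m ∧ ∀ (g : G) (f : G →ᵇ ℝ), m (lTrans G g f) = m f

/-- The indicator function of a set, as an element of ℓ∞(G). -/
noncomputable def indBCF (G : Type*) [Group G] [TopologicalSpace G] [DiscreteTopology G]
    (A : Set G) : G →ᵇ ℝ :=
  BoundedContinuousFunction.ofNormedAddCommGroup (Set.indicator A 1)
    continuous_of_discreteTopology 1 (by
      intro x
      by_cases h : x ∈ A <;> simp [Set.indicator_apply, h])

open MeasureTheory

/-- The orbit map `g ↦ g • x₀` as a continuous map (G discrete). -/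
def orbMap (G X : Type*) [Group G] [TopologicalSpace G] [DiscreteTopology G]
    [TopologicalSpace X] [MulAction G X] (x₀ : X) : C(G, X) :=
  ⟨fun g => g • x₀, continuous_of_discreteTopology⟩

/-!
The Bebutov map `S_{x₀}` intertwines the action on `X` with left translation on `ℓ∞(G)`, so a
measure represented by a left-invariant mean is invariant. Conversely, since the orbit of `x₀` is
dense, `S_{x₀}` is injective and order-reflecting, so integration against an invariant `μ` is a
positive functional on its range; the M. Riesz extension theorem extends it to a mean, and
averaging the translates of that mean against a left-invariant mean makes it invariant without
changing it on the range. Finally, let `s` be invariant with `0 < μ s < 1` and let `f_n` be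
continuous functions with values in `[0, 1]` tending to `1_s` in `L¹(μ)`. Then
`L φ = lim m (S_{x₀} f_n * φ)` is an invariant functional with `0 ≤ L ≤ m` that represents `μ`
restricted to `s`, and extremality of `m` forces `m = L / μ s`, i.e. `μ|_s = μ s • μ`, which is
impossible.
-/

open Filter Topology BoundedContinuousFunction

instance BoundedContinuousFunction.instPosSMulMonoReal {α : Type*} [TopologicalSpace α] :
    PosSMulMono ℝ (α →ᵇ ℝ) :=
  ⟨fun _ hc _ _ hfg x => mul_le_mul_of_nonneg_left (hfg x) hc⟩

section Means

variable {G : Type*} [Group G] [TopologicalSpace G] [DiscreteTopology G]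
  {m : (G →ᵇ ℝ) →ₗ[ℝ] ℝ}

@[simp] lemma lTrans_apply (g : G) (φ : G →ᵇ ℝ) (t : G) : lTrans G g φ t = φ (g⁻¹ * t) := rfl

lemma lTrans_lTrans (g h : G) (φ : G →ᵇ ℝ) : lTrans G g (lTrans G h φ) = lTrans G (g * h) φ := by
  ext t; simp [mul_assoc]

lemma lTrans_inv_lTrans (g : G) (φ : G →ᵇ ℝ) : lTrans G g⁻¹ (lTrans G g φ) = φ := by
  ext t; simp

lemma lTrans_add (g : G) (ψ φ : G →ᵇ ℝ) : lTrans G g (ψ + φ) = lTrans G g ψ + lTrans G g φ := rfl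

lemma lTrans_smul (g : G) (c : ℝ) (φ : G →ᵇ ℝ) : lTrans G g (c • φ) = c • lTrans G g φ := rfl

lemma lTrans_one (g : G) : lTrans G g 1 = 1 := rfl

lemma lTrans_mul (g : G) (ψ φ : G →ᵇ ℝ) : lTrans G g (ψ * φ) = lTrans G g ψ * lTrans G g φ := rfl

lemma norm_lTrans_le (g : G) (φ : G →ᵇ ℝ) : ‖lTrans G g φ‖ ≤ ‖φ‖ :=
  φ.norm_compContinuous_le _

lemma IsMean.mono (hm : IsMean G m) {φ ψ : G →ᵇ ℝ} (h : φ ≤ ψ) : m φ ≤ m ψ := by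
  simpa using hm.2 (ψ - φ) (sub_nonneg.2 h)

lemma IsMean.apply_const (hm : IsMean G m) (c : ℝ) : m (const G c) = c := by
  have : const G c = c • (1 : G →ᵇ ℝ) := by ext; simp
  rw [this, map_smul, hm.1, smul_eq_mul, mul_one]

lemma IsMean.abs_apply_le_apply_abs (hm : IsMean G m) (φ : G →ᵇ ℝ) : |m φ| ≤ m |φ| :=
  abs_le'.2 ⟨hm.mono (le_abs_self φ), by simpa using hm.mono (neg_le_abs φ)⟩

lemma IsMean.abs_apply_le_norm (hm : IsMean G m) (φ : G →ᵇ ℝ) : |m φ| ≤ ‖φ‖ := by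
  refine (hm.abs_apply_le_apply_abs φ).trans ?_
  simpa [hm.apply_const] using hm.mono (fun t => by simpa using φ.norm_coe_le_norm t :
    |φ| ≤ const G ‖φ‖)

lemma IsMean.abs_apply_mul_le (hm : IsMean G m) (ψ φ : G →ᵇ ℝ) :
    |m (ψ * φ)| ≤ ‖φ‖ * m |ψ| := by
  refine (hm.abs_apply_le_apply_abs _).trans ?_
  rw [show ‖φ‖ * m |ψ| = m (‖φ‖ • |ψ|) by rw [map_smul, smul_eq_mul]]
  refine hm.mono fun t => ?_
  simpa [abs_mul, mul_comm] using
    mul_le_mul_of_nonneg_left (φ.norm_coe_le_norm t) (abs_nonneg (ψ t))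

noncomputable def IsMean.translates (hm : IsMean G m) : (G →ᵇ ℝ) →ₗ[ℝ] (G →ᵇ ℝ) where
  toFun φ := ofNormedAddCommGroupDiscrete (fun g => m (lTrans G g⁻¹ φ)) ‖φ‖
    fun g => (hm.abs_apply_le_norm _).trans (norm_lTrans_le _ _)
  map_add' φ ψ := by ext g; simp [lTrans_add]
  map_smul' c φ := by ext g; simp [lTrans_smul]

@[simp] lemma IsMean.translates_apply (hm : IsMean G m) (φ : G →ᵇ ℝ) (g : G) :
    hm.translates φ g = m (lTrans G g⁻¹ φ) := rfl

lemma IsMean.translates_lTrans (hm : IsMean G m) (g : G) (φ : G →ᵇ ℝ) :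
    hm.translates (lTrans G g φ) = lTrans G g (hm.translates φ) := by
  ext t; simp [lTrans_lTrans]

/-- The witness is the average `φ ↦ m₀ (g ↦ m (g⁻¹ · φ))`. -/
theorem IsLeftInvariantMean.exists_eq_of_isMean {m₀ : (G →ᵇ ℝ) →ₗ[ℝ] ℝ}
    (hm₀ : IsLeftInvariantMean G m₀) (hm : IsMean G m) :
    ∃ M : (G →ᵇ ℝ) →ₗ[ℝ] ℝ, IsLeftInvariantMean G M ∧
      ∀ φ, (∀ g, m (lTrans G g φ) = m φ) → M φ = m φ := by
  have const_of_invariant {φ : G →ᵇ ℝ} (hφ : ∀ g, m (lTrans G g φ) = m φ) :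
      hm.translates φ = const G (m φ) := by
    ext g; simp [hφ]
  refine ⟨m₀ ∘ₗ hm.translates, ⟨⟨?_, fun φ hφ => hm₀.1.2 _ fun g => ?_⟩, fun g φ => ?_⟩,
    fun φ hφ => ?_⟩
  · simpa [const_of_invariant fun g => congrArg m (lTrans_one g), hm.1] using hm₀.1.apply_const 1
  · exact hm.2 _ fun t => hφ (g⁻¹⁻¹ * t)
  · simp [hm.translates_lTrans, hm₀.2]
  · simp [const_of_invariant hφ, hm₀.1.apply_const]

end Means

section Bebutov

variable {G X : Type*} [Group G] [TopologicalSpace G] [DiscreteTopology G]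
  [TopologicalSpace X] [MulAction G X] {x₀ : X}

variable (G) in
noncomputable def bebutov (x₀ : X) : (X →ᵇ ℝ) →ₗ[ℝ] (G →ᵇ ℝ) where
  toFun f := f.compContinuous (orbMap G X x₀)
  map_add' _ _ := rfl
  map_smul' _ _ := rfl

@[simp] lemma bebutov_apply (f : X →ᵇ ℝ) (t : G) : bebutov G x₀ f t = f (t • x₀) := rfl

lemma bebutov_one : bebutov G x₀ 1 = 1 := rfl

lemma bebutov_mul (f h : X →ᵇ ℝ) : bebutov G x₀ (f * h) = bebutov G x₀ f * bebutov G x₀ h := rfl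

lemma bebutov_abs (f : X →ᵇ ℝ) : bebutov G x₀ |f| = |bebutov G x₀ f| := rfl

lemma bebutov_comp_smul [ContinuousConstSMul G X] (g : G) (f : X →ᵇ ℝ) :
    bebutov G x₀ (f.compContinuous ⟨(g • ·), continuous_const_smul g⟩) =
      lTrans G g⁻¹ (bebutov G x₀ f) := by
  ext t; simp [mul_smul]

lemma nonneg_of_bebutov_nonneg (hx₀ : Dense (Set.range fun g : G => g • x₀)) {f : X →ᵇ ℝ}
    (hf : 0 ≤ bebutov G x₀ f) : 0 ≤ f := by
  have : Set.range (fun g : G => g • x₀) ⊆ {x | 0 ≤ f x} := by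
    rintro - ⟨g, rfl⟩
    exact hf g
  exact fun x => (isClosed_le continuous_const f.continuous).closure_subset_iff.2 this (hx₀ x)

lemma bebutov_injective (hx₀ : Dense (Set.range fun g : G => g • x₀)) :
    Function.Injective (bebutov G x₀) := by
  intro f h hfh
  refine BoundedContinuousFunction.ext <|
    congrFun (Continuous.ext_on hx₀ f.continuous h.continuous ?_)
  rintro - ⟨g, rfl⟩
  exact DFunLike.congr_fun hfh g

theorem exists_isMean_bebutov_eq (hx₀ : Dense (Set.range fun g : G => g • x₀))
    (Λ : (X →ᵇ ℝ) →ₗ[ℝ] ℝ) (hΛ : ∀ f, 0 ≤ f → 0 ≤ Λ f) (hΛ₁ : Λ 1 = 1) :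
    ∃ m : (G →ᵇ ℝ) →ₗ[ℝ] ℝ, IsMean G m ∧ ∀ f, m (bebutov G x₀ f) = Λ f := by
  let e := LinearEquiv.ofInjective (bebutov G x₀) (bebutov_injective hx₀)
  have he (f : X →ᵇ ℝ) : e.symm ⟨bebutov G x₀ f, f, rfl⟩ = f :=
    e.symm_apply_apply f
  let Λ' : (G →ᵇ ℝ) →ₗ.[ℝ] ℝ := ⟨_, Λ ∘ₗ e.symm.toLinearMap⟩
  have hΛ'_nonneg (φ : Λ'.domain) (hφ : (φ : G →ᵇ ℝ) ∈ PointedCone.positive ℝ (G →ᵇ ℝ)) :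
      0 ≤ Λ' φ := by
    obtain ⟨-, f, rfl⟩ := φ
    simpa [Λ', he] using hΛ f (nonneg_of_bebutov_nonneg hx₀ hφ)
  have hΛ'_dense (φ : G →ᵇ ℝ) :
      ∃ ψ : Λ'.domain, (ψ : G →ᵇ ℝ) + φ ∈ PointedCone.positive ℝ (G →ᵇ ℝ) := by
    refine ⟨e (const X ‖φ‖), fun t => ?_⟩
    simpa [e, neg_le_iff_add_nonneg'] using (abs_le.1 (φ.norm_coe_le_norm t)).1
  obtain ⟨m, hm_ext, hm_pos⟩ := riesz_extension _ Λ' hΛ'_nonneg hΛ'_dense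
  have hmS (f : X →ᵇ ℝ) : m (bebutov G x₀ f) = Λ f := by
    simpa [Λ', he] using hm_ext ⟨bebutov G x₀ f, f, rfl⟩
  exact ⟨m, ⟨by rw [← bebutov_one (x₀ := x₀), hmS, hΛ₁], fun φ hφ => hm_pos φ hφ⟩, hmS⟩

end Bebutov

section Adjoint

variable {G X : Type*} [Group G] [TopologicalSpace G] [DiscreteTopology G]
  [TopologicalSpace X] [MulAction G X] [ContinuousConstSMul G X] [MeasurableSpace X]
  [BorelSpace X] {x₀ : X} {m : (G →ᵇ ℝ) →ₗ[ℝ] ℝ} {μ : Measure X}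

theorem IsLeftInvariantMean.map_smul_eq [HasOuterApproxClosed X] [IsFiniteMeasure μ]
    (hm : IsLeftInvariantMean G m) (hμ : ∀ f : X →ᵇ ℝ, ∫ x, f x ∂μ = m (bebutov G x₀ f))
    (g : G) : μ.map (fun x : X => g • x) = μ := by
  have hg : Measurable (fun x : X => g • x) := (continuous_const_smul g).measurable
  refine ext_of_forall_integral_eq_of_IsFiniteMeasure fun f => ?_
  rw [integral_map hg.aemeasurable f.continuous.aestronglyMeasurable]
  calc ∫ x, f (g • x) ∂μ = m (lTrans G g⁻¹ (bebutov G x₀ f)) := by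
        rw [← bebutov_comp_smul]; exact hμ (f.compContinuous ⟨(g • ·), continuous_const_smul g⟩)
    _ = ∫ x, f x ∂μ := by rw [hm.2, hμ]

theorem exists_isLeftInvariantMean_integral_eq (hx₀ : Dense (Set.range fun g : G => g • x₀))
    (hamen : ∃ m₀ : (G →ᵇ ℝ) →ₗ[ℝ] ℝ, IsLeftInvariantMean G m₀) [IsProbabilityMeasure μ]
    (hμ : ∀ g : G, μ.map (fun x : X => g • x) = μ) :
    ∃ m, IsLeftInvariantMean G m ∧ ∀ f : X →ᵇ ℝ, ∫ x, f x ∂μ = m (bebutov G x₀ f) := by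
  obtain ⟨m₀, hm₀⟩ := hamen
  let Λ : (X →ᵇ ℝ) →ₗ[ℝ] ℝ :=
    { toFun f := ∫ x, f x ∂μ
      map_add' f h := integral_add (f.integrable μ) (h.integrable μ)
      map_smul' c f := integral_smul c _ }
  obtain ⟨m, hm, hmΛ⟩ := exists_isMean_bebutov_eq hx₀ Λ (fun f hf => integral_nonneg hf)
    (by simp [Λ])
  obtain ⟨M, hM, hMm⟩ := hm₀.exists_eq_of_isMean hm
  refine ⟨M, hM, fun f => ?_⟩
  rw [hMm _ fun g => ?_, hmΛ]
  · rfl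
  rw [← inv_inv g, ← bebutov_comp_smul, hmΛ, hmΛ]
  calc ∫ x, f (g⁻¹ • x) ∂μ = ∫ x, f x ∂(μ.map (fun x : X => g⁻¹ • x)) :=
        (integral_map (continuous_const_smul _).aemeasurable f.continuous.aestronglyMeasurable).symm
    _ = ∫ x, f x ∂μ := by rw [hμ]

end Adjoint

section Extreme

variable {G : Type*} [Group G] [TopologicalSpace G] [DiscreteTopology G]
  {m L : (G →ᵇ ℝ) →ₗ[ℝ] ℝ} {ψ : ℕ → G →ᵇ ℝ}

theorem IsMean.exists_tendsto_apply_mul (hm : IsMean G m)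
    (hψ : Tendsto (fun p : ℕ × ℕ => m |ψ p.1 - ψ p.2|) atTop (𝓝 0)) :
    ∃ L : (G →ᵇ ℝ) →ₗ[ℝ] ℝ, ∀ φ, Tendsto (fun n => m (ψ n * φ)) atTop (𝓝 (L φ)) := by
  have hcauchy (φ : G →ᵇ ℝ) : CauchySeq fun n => m (ψ n * φ) := by
    refine cauchySeq_iff_tendsto_dist_atTop_0.2 <|
      squeeze_zero (fun _ => dist_nonneg) (fun p => ?_) (by simpa using hψ.const_mul ‖φ‖)
    rw [Real.dist_eq, ← map_sub, ← sub_mul]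
    exact hm.abs_apply_mul_le _ _
  choose L hL using fun φ => cauchySeq_tendsto_of_complete (hcauchy φ)
  exact ⟨linearMapOfTendsto L (fun n => m ∘ₗ LinearMap.mulLeft ℝ (ψ n)) (tendsto_pi_nhds.2 hL),
    hL⟩

lemma IsMean.nonneg_of_tendsto_apply_mul (hm : IsMean G m) (hψ : ∀ n, 0 ≤ ψ n)
    (hL : ∀ φ, Tendsto (fun n => m (ψ n * φ)) atTop (𝓝 (L φ))) {φ : G →ᵇ ℝ} (hφ : 0 ≤ φ) :
    0 ≤ L φ :=
  ge_of_tendsto' (hL φ) fun n => hm.2 _ fun t => mul_nonneg (hψ n t) (hφ t)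

lemma IsMean.le_of_tendsto_apply_mul (hm : IsMean G m) (hψ : ∀ n, ψ n ≤ 1)
    (hL : ∀ φ, Tendsto (fun n => m (ψ n * φ)) atTop (𝓝 (L φ))) {φ : G →ᵇ ℝ} (hφ : 0 ≤ φ) :
    L φ ≤ m φ :=
  le_of_tendsto' (hL φ) fun n => hm.mono fun t => mul_le_of_le_one_left (hφ t) (hψ n t)

lemma IsLeftInvariantMean.apply_lTrans_of_tendsto (hm : IsLeftInvariantMean G m)
    (hL : ∀ φ, Tendsto (fun n => m (ψ n * φ)) atTop (𝓝 (L φ)))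
    (hψ : ∀ g, Tendsto (fun n => m |lTrans G g (ψ n) - ψ n|) atTop (𝓝 0)) (g : G)
    (φ : G →ᵇ ℝ) : L (lTrans G g φ) = L φ := by
  have hbound (n : ℕ) : ‖m (ψ n * lTrans G g φ) - m (ψ n * φ)‖ ≤
      ‖φ‖ * m |lTrans G g⁻¹ (ψ n) - ψ n| := by
    rw [← hm.2 g⁻¹ (ψ n * lTrans G g φ), lTrans_mul, lTrans_inv_lTrans, ← map_sub, ← sub_mul]
    exact hm.1.abs_apply_mul_le _ _
  have hzero : Tendsto (fun n => m (ψ n * lTrans G g φ) - m (ψ n * φ)) atTop (𝓝 0) :=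
    squeeze_zero_norm hbound (by simpa using (hψ g⁻¹).const_mul ‖φ‖)
  exact sub_eq_zero.1 (tendsto_nhds_unique ((hL _).sub (hL φ)) hzero)

lemma isLeftInvariantMean_inv_smul (hL : ∀ φ, 0 ≤ φ → 0 ≤ L φ)
    (hLinv : ∀ g φ, L (lTrans G g φ) = L φ) (h₁ : 0 < L 1) :
    IsLeftInvariantMean G ((L 1)⁻¹ • L) :=
  ⟨⟨by simp [h₁.ne'], fun φ hφ => mul_nonneg (inv_nonneg.2 h₁.le) (hL φ hφ)⟩,
    fun g φ => by simp [hLinv]⟩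

/-- `m = c • (L / c) + (1 - c) • ((m - L) / (1 - c))` with `c = L 1`, a convex combination of
left-invariant means. -/
theorem inv_smul_eq_of_mem_extremePoints
    (hm : m ∈ Set.extremePoints ℝ {m' | IsLeftInvariantMean G m'})
    (hL : ∀ φ, 0 ≤ φ → 0 ≤ L φ) (hLm : ∀ φ, 0 ≤ φ → L φ ≤ m φ)
    (hLinv : ∀ g φ, L (lTrans G g φ) = L φ) (h₀ : 0 < L 1) (h₁ : L 1 < 1) :
    (L 1)⁻¹ • L = m := by
  have hm₁ : m 1 = 1 := hm.1.1.1
  have hrest : IsLeftInvariantMean G (((m - L) 1)⁻¹ • (m - L)) :=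
    isLeftInvariantMean_inv_smul (fun φ hφ => sub_nonneg.2 (hLm φ hφ))
      (fun g φ => by simp [hm.1.2, hLinv]) (by simpa [hm₁] using h₁)
  refine hm.2 (isLeftInvariantMean_inv_smul hL hLinv h₀) hrest
    ⟨L 1, (m - L) 1, h₀, by simpa [hm₁] using h₁, by simp [hm₁], ?_⟩
  have : (m - L) 1 ≠ 0 := by simpa [hm₁, sub_eq_zero] using h₁.ne'
  rw [smul_smul, smul_smul, mul_inv_cancel₀ h₀.ne', mul_inv_cancel₀ this, one_smul, one_smul,
    add_sub_cancel]

end Extreme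

section Integrals

variable {X : Type*} [MeasurableSpace X] {μ : Measure X}

lemma integral_abs_sub_le_add {u v w : X → ℝ} (hu : Integrable u μ) (hv : Integrable v μ)
    (hw : Integrable w μ) :
    ∫ x, |u x - v x| ∂μ ≤ ∫ x, |u x - w x| ∂μ + ∫ x, |v x - w x| ∂μ := by
  refine (integral_mono (hu.sub hv).abs ((hu.sub hw).abs.add (hv.sub hw).abs) fun x => ?_).trans_eq
    (integral_add (hu.sub hw).abs (hv.sub hw).abs)
  simpa only [Pi.sub_apply, Pi.add_apply, abs_sub_comm (v x)] using abs_sub_le (u x) (w x) (v x)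

lemma tendsto_integral_mul_of_tendsto_integral_abs_sub [TopologicalSpace X]
    [OpensMeasurableSpace X] {ι : Type*} {l : Filter ι} {u : ι → X → ℝ} {v : X → ℝ}
    (hu : ∀ i, Integrable (u i) μ) (hv : Integrable v μ) (h : X →ᵇ ℝ)
    (huv : Tendsto (fun i => ∫ x, |u i x - v x| ∂μ) l (𝓝 0)) :
    Tendsto (fun i => ∫ x, u i x * h x ∂μ) l (𝓝 (∫ x, v x * h x ∂μ)) := by
  have hint {w : X → ℝ} (hw : Integrable w μ) : Integrable (fun x => w x * h x) μ :=
    hw.mul_bdd h.continuous.aestronglyMeasurable (ae_of_all _ h.norm_coe_le_norm)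
  refine tendsto_iff_norm_sub_tendsto_zero.2 <|
    squeeze_zero (fun _ => norm_nonneg _) (fun i => ?_) (by simpa using huv.const_mul ‖h‖)
  calc ‖∫ x, u i x * h x ∂μ - ∫ x, v x * h x ∂μ‖
      = ‖∫ x, (u i x - v x) * h x ∂μ‖ := by
        rw [← integral_sub (hint (hu i)) (hint hv)]; simp_rw [sub_mul]
    _ ≤ ∫ x, ‖(u i x - v x) * h x‖ ∂μ := norm_integral_le_integral_norm _
    _ ≤ ∫ x, ‖h‖ * |u i x - v x| ∂μ := by
        refine integral_mono_of_nonneg (ae_of_all _ fun _ => norm_nonneg _)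
          (((hu i).sub hv).abs.const_mul _) (ae_of_all _ fun x => ?_)
        simp only [norm_mul, Real.norm_eq_abs, mul_comm ‖h‖]
        exact mul_le_mul_of_nonneg_left (by simpa using h.norm_coe_le_norm x) (abs_nonneg _)
    _ = ‖h‖ * ∫ x, |u i x - v x| ∂μ := integral_const_mul _ _

lemma exists_seq_tendsto_integral_abs_sub_indicator [TopologicalSpace X] [NormalSpace X]
    [BorelSpace X] [IsFiniteMeasure μ] [μ.WeaklyRegular] {s : Set X} (hs : MeasurableSet s) :
    ∃ f : ℕ → X →ᵇ ℝ, (∀ n, 0 ≤ f n ∧ f n ≤ 1) ∧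
      Tendsto (fun n => ∫ x, |f n x - s.indicator 1 x| ∂μ) atTop (𝓝 0) := by
  have hind : Integrable (s.indicator (1 : X → ℝ)) μ := (integrable_const 1).indicator hs
  have (n : ℕ) : ∃ f : X →ᵇ ℝ, (0 ≤ f ∧ f ≤ 1) ∧
      ∫ x, |f x - s.indicator 1 x| ∂μ ≤ 1 / (n + 1) := by
    obtain ⟨g, hg, -⟩ := hind.exists_boundedContinuous_integral_sub_le Nat.one_div_pos_of_nat
    -- clamping `g` to `[0, 1]` only brings it closer to the indicator
    refine ⟨0 ⊔ (1 ⊓ g), ⟨le_sup_left, sup_le (fun _ => by simp) inf_le_left⟩, le_trans ?_ hg⟩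
    refine integral_mono (((0 ⊔ (1 ⊓ g)).integrable μ).sub hind).abs
      (hind.sub (g.integrable μ)).norm fun x => ?_
    have hx : s.indicator (1 : X → ℝ) x ∈ Set.Icc 0 1 := by
      by_cases hxs : x ∈ s <;> simp [hxs]
    have := Set.abs_projIcc_sub_projIcc (h := zero_le_one) (c := g x) (d := s.indicator 1 x)
    rw [Set.projIcc_of_mem _ hx, Set.coe_projIcc] at this
    simpa [Real.norm_eq_abs, abs_sub_comm] using this
  choose f hf01 hf using this
  exact ⟨f, hf01, squeeze_zero (fun n => integral_nonneg fun x => abs_nonneg _) hf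
    tendsto_one_div_add_atTop_nhds_zero_nat⟩

end Integrals

section Ergodic

variable {G X : Type*} [Group G] [TopologicalSpace G] [DiscreteTopology G]
  [TopologicalSpace X] [MulAction G X] [ContinuousConstSMul G X] [MeasurableSpace X]
  [BorelSpace X] {x₀ : X} {m : (G →ᵇ ℝ) →ₗ[ℝ] ℝ} {μ : Measure X} {s : Set X}

omit [ContinuousConstSMul G X] [BorelSpace X] in
lemma tendsto_apply_abs_bebutov_sub (hm : IsMean G m)
    (hμ : ∀ f : X →ᵇ ℝ, ∫ x, f x ∂μ = m (bebutov G x₀ f)) {f : ℕ → X →ᵇ ℝ} {v : X → ℝ}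
    (hf : ∀ n, Integrable (f n) μ) (hv : Integrable v μ)
    (hfv : Tendsto (fun n => ∫ x, |f n x - v x| ∂μ) atTop (𝓝 0)) :
    Tendsto (fun p : ℕ × ℕ => m |bebutov G x₀ (f p.1) - bebutov G x₀ (f p.2)|) atTop (𝓝 0) := by
  have he : Tendsto (fun p : ℕ × ℕ => ∫ x, |f p.1 x - v x| ∂μ + ∫ x, |f p.2 x - v x| ∂μ)
      atTop (𝓝 0) := by
    rw [← prod_atTop_atTop_eq]
    simpa using (hfv.comp tendsto_fst).add (hfv.comp tendsto_snd)
  refine squeeze_zero (fun p => hm.2 _ (abs_nonneg _)) (fun p => ?_) he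
  rw [← map_sub, ← bebutov_abs, ← hμ]
  exact integral_abs_sub_le_add (hf p.1) (hf p.2) hv

omit [TopologicalSpace G] [DiscreteTopology G] in
lemma integral_abs_comp_smul_sub_le [IsFiniteMeasure μ]
    (hμ : ∀ g : G, μ.map (fun x : X => g • x) = μ) (hs : MeasurableSet s)
    (hsinv : ∀ g : G, (fun x : X => g • x) ⁻¹' s = s) (f : X →ᵇ ℝ) (g : G) :
    ∫ x, |f (g • x) - f x| ∂μ ≤ 2 * ∫ x, |f x - s.indicator 1 x| ∂μ := by
  have hind : Integrable (s.indicator (1 : X → ℝ)) μ := (integrable_const 1).indicator hs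
  have hsg (x : X) : s.indicator (1 : X → ℝ) (g • x) = s.indicator 1 x := by
    rw [← Set.indicator_comp_right (g • · : X → X), hsinv g]; rfl
  have hshift : ∫ x, |f (g • x) - s.indicator 1 x| ∂μ = ∫ x, |f x - s.indicator 1 x| ∂μ := by
    have hmp : MeasurePreserving (MeasurableEquiv.smul g : X ≃ᵐ X) μ μ :=
      ⟨(MeasurableEquiv.smul g).measurable, hμ g⟩
    simpa [hsg] using hmp.integral_comp' fun y => |f y - s.indicator 1 y|
  calc ∫ x, |f (g • x) - f x| ∂μ
      ≤ ∫ x, |f (g • x) - s.indicator 1 x| ∂μ + ∫ x, |f x - s.indicator 1 x| ∂μ :=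
        integral_abs_sub_le_add ((f.compContinuous ⟨_, continuous_const_smul g⟩).integrable μ)
          (f.integrable μ) hind
    _ = 2 * ∫ x, |f x - s.indicator 1 x| ∂μ := by rw [hshift]; ring

theorem IsLeftInvariantMean.exists_bebutov_eq_setIntegral [NormalSpace X] [IsFiniteMeasure μ]
    [μ.WeaklyRegular] (hm : IsLeftInvariantMean G m)
    (hμ : ∀ f : X →ᵇ ℝ, ∫ x, f x ∂μ = m (bebutov G x₀ f))
    (hμinv : ∀ g : G, μ.map (fun x : X => g • x) = μ) (hs : MeasurableSet s)
    (hsinv : ∀ g : G, (fun x : X => g • x) ⁻¹' s = s) :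
    ∃ L : (G →ᵇ ℝ) →ₗ[ℝ] ℝ, (∀ φ, 0 ≤ φ → 0 ≤ L φ) ∧ (∀ φ, 0 ≤ φ → L φ ≤ m φ) ∧
      (∀ g φ, L (lTrans G g φ) = L φ) ∧ ∀ h : X →ᵇ ℝ, L (bebutov G x₀ h) = ∫ x in s, h x ∂μ := by
  obtain ⟨f, hf01, hf⟩ := exists_seq_tendsto_integral_abs_sub_indicator (μ := μ) hs
  have hind : Integrable (s.indicator (1 : X → ℝ)) μ := (integrable_const 1).indicator hs
  have hcauchy := tendsto_apply_abs_bebutov_sub (x₀ := x₀) hm.1 hμ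
    (fun n => (f n).integrable μ) hind hf
  have hinv (g : G) : Tendsto (fun n =>
      m |lTrans G g (bebutov G x₀ (f n)) - bebutov G x₀ (f n)|) atTop (𝓝 0) := by
    have he : Tendsto (fun n => 2 * ∫ x, |f n x - s.indicator 1 x| ∂μ) atTop (𝓝 0) := by
      simpa using hf.const_mul 2
    refine squeeze_zero (fun n => hm.1.2 _ (abs_nonneg _)) (fun n => ?_) he
    rw [← inv_inv g, ← bebutov_comp_smul, ← map_sub, ← bebutov_abs, ← hμ]
    exact integral_abs_comp_smul_sub_le hμinv hs hsinv (f n) g⁻¹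
  obtain ⟨L, hL⟩ := hm.1.exists_tendsto_apply_mul (ψ := fun n => bebutov G x₀ (f n)) hcauchy
  have hψ01 (n : ℕ) : 0 ≤ bebutov G x₀ (f n) ∧ bebutov G x₀ (f n) ≤ 1 :=
    ⟨fun t => (hf01 n).1 (t • x₀), fun t => (hf01 n).2 (t • x₀)⟩
  refine ⟨L, fun φ => hm.1.nonneg_of_tendsto_apply_mul (fun n => (hψ01 n).1) hL,
    fun φ => hm.1.le_of_tendsto_apply_mul (fun n => (hψ01 n).2) hL,
    hm.apply_lTrans_of_tendsto hL hinv, fun h => tendsto_nhds_unique (hL _) ?_⟩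
  have hindh : (fun x => s.indicator 1 x * h x) = s.indicator h := by
    ext x; by_cases hx : x ∈ s <;> simp [hx]
  simp_rw [← bebutov_mul, ← hμ, ← integral_indicator hs, ← hindh]
  exact tendsto_integral_mul_of_tendsto_integral_abs_sub (fun n => (f n).integrable μ) hind h hf

theorem measure_eq_zero_or_one_of_mem_extremePoints [TopologicalSpace.PseudoMetrizableSpace X]
    (hm : m ∈ Set.extremePoints ℝ {m' | IsLeftInvariantMean G m'}) [IsProbabilityMeasure μ]
    (hμ : ∀ f : X →ᵇ ℝ, ∫ x, f x ∂μ = m (bebutov G x₀ f)) (hs : MeasurableSet s)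
    (hsinv : ∀ g : G, (fun x : X => g • x) ⁻¹' s = s) : μ s = 0 ∨ μ s = 1 := by
  obtain ⟨L, hL, hLm, hLinv, hLS⟩ :=
    hm.1.exists_bebutov_eq_setIntegral hμ (hm.1.map_smul_eq hμ) hs hsinv
  by_contra! ⟨hs0, hs1⟩
  have hL1 : L 1 = μ.real s := by rw [← bebutov_one (x₀ := x₀), hLS]; simp
  have hc0 : 0 < μ.real s := ENNReal.toReal_pos hs0 (measure_ne_top μ s)
  have hc1 : μ.real s < 1 := by
    simpa [measureReal_def] using
      (ENNReal.toReal_lt_toReal (measure_ne_top μ s) ENNReal.one_ne_top).2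
        (prob_le_one.lt_of_ne hs1)
  have hmL := inv_smul_eq_of_mem_extremePoints hm hL hLm hLinv (hL1 ▸ hc0) (hL1 ▸ hc1)
  have hrestrict : μ.restrict s = μ s • μ := by
    have := μ.smul_finite (measure_ne_top μ s)
    refine ext_of_forall_integral_eq_of_IsFiniteMeasure fun h => ?_
    rw [integral_smul_measure, hμ, ← hmL, LinearMap.smul_apply, hLS, hL1, smul_eq_mul,
      smul_eq_mul, ← measureReal_def, mul_inv_cancel_left₀ hc0.ne']
  have : μ sᶜ = 0 := by
    simpa [Measure.restrict_apply hs.compl, hs0] using congrArg (· sᶜ) hrestrict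
  exact hs1 ((prob_compl_eq_zero_iff hs).1 this)

end Ergodic

theorem bebutov_adjoint_surjective_and_extreme_to_ergodic_general {G X : Type*} [Group G]
    [TopologicalSpace G] [DiscreteTopology G]
    [TopologicalSpace X] [TopologicalSpace.MetrizableSpace X]
    [MeasurableSpace X] [BorelSpace X] [MulAction G X]
    (hcont : ∀ g : G, Continuous fun x : X => g • x)
    (x₀ : X) (hx₀ : Dense (Set.range fun g : G => g • x₀))
    (hamen : ∃ m : (G →ᵇ ℝ) →ₗ[ℝ] ℝ, IsLeftInvariantMean G m) :
    -- the adjoint of the Bebutov map sends left-invariant means to invariant measures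
    (∀ m : (G →ᵇ ℝ) →ₗ[ℝ] ℝ, IsLeftInvariantMean G m →
      ∀ μ : Measure X, IsProbabilityMeasure μ →
        (∀ f : X →ᵇ ℝ, ∫ x, f x ∂μ = m (f.compContinuous (orbMap G X x₀))) →
        ∀ g : G, Measure.map (fun x : X => g • x) μ = μ) ∧
    -- onto the set of `G`-invariant Borel probability measures
    (∀ μ : Measure X, IsProbabilityMeasure μ →
      (∀ g : G, Measure.map (fun x : X => g • x) μ = μ) →
      ∃ m : (G →ᵇ ℝ) →ₗ[ℝ] ℝ, IsLeftInvariantMean G m ∧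
        ∀ f : X →ᵇ ℝ, ∫ x, f x ∂μ = m (f.compContinuous (orbMap G X x₀))) ∧
    -- extreme left-invariant means are mapped to ergodic measures
    (∀ m : (G →ᵇ ℝ) →ₗ[ℝ] ℝ,
      m ∈ Set.extremePoints ℝ {m' : (G →ᵇ ℝ) →ₗ[ℝ] ℝ | IsLeftInvariantMean G m'} →
      ∀ μ : Measure X, IsProbabilityMeasure μ →
        (∀ f : X →ᵇ ℝ, ∫ x, f x ∂μ = m (f.compContinuous (orbMap G X x₀))) →
        ∀ s : Set X, MeasurableSet s →
          (∀ g : G, (fun x : X => g • x) ⁻¹' s = s) → μ s = 0 ∨ μ s = 1) := by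
  have : ContinuousConstSMul G X := ⟨hcont⟩
  exact ⟨fun m hm μ _ hμ => hm.map_smul_eq hμ,
    fun μ _ hμ => exists_isLeftInvariantMean_integral_eq hx₀ hamen hμ,
    fun m hm μ _ hμ s hs hsinv => measure_eq_zero_or_one_of_mem_extremePoints hm hμ hs hsinv⟩

/-- The adjoint of the Bebutov map sends left-invariant means onto the set of
`G`-invariant Borel probability measures on `X`, and sends extreme left-invariant means
to ergodic `G`-invariant measures. -/
theorem bebutov_adjoint_surjective_and_extreme_to_ergodic {G X : Type*} [Group G]
    [Countable G] [TopologicalSpace G] [DiscreteTopology G]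
    [TopologicalSpace X] [CompactSpace X] [TopologicalSpace.MetrizableSpace X]
    [MeasurableSpace X] [BorelSpace X] [MulAction G X]
    (hcont : ∀ g : G, Continuous fun x : X => g • x)
    (x₀ : X) (hx₀ : Dense (Set.range fun g : G => g • x₀))
    (hamen : ∃ m : (G →ᵇ ℝ) →ₗ[ℝ] ℝ, IsLeftInvariantMean G m) :
    -- the adjoint of the Bebutov map sends left-invariant means to invariant measures
    (∀ m : (G →ᵇ ℝ) →ₗ[ℝ] ℝ, IsLeftInvariantMean G m →
      ∀ μ : Measure X, IsProbabilityMeasure μ →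
        (∀ f : X →ᵇ ℝ, ∫ x, f x ∂μ = m (f.compContinuous (orbMap G X x₀))) →
        ∀ g : G, Measure.map (fun x : X => g • x) μ = μ) ∧
    -- onto the set of `G`-invariant Borel probability measures
    (∀ μ : Measure X, IsProbabilityMeasure μ →
      (∀ g : G, Measure.map (fun x : X => g • x) μ = μ) →
      ∃ m : (G →ᵇ ℝ) →ₗ[ℝ] ℝ, IsLeftInvariantMean G m ∧
        ∀ f : X →ᵇ ℝ, ∫ x, f x ∂μ = m (f.compContinuous (orbMap G X x₀))) ∧
    -- extreme left-invariant means are mapped to ergodic measures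
    (∀ m : (G →ᵇ ℝ) →ₗ[ℝ] ℝ,
      m ∈ Set.extremePoints ℝ {m' : (G →ᵇ ℝ) →ₗ[ℝ] ℝ | IsLeftInvariantMean G m'} →
      ∀ μ : Measure X, IsProbabilityMeasure μ →
        (∀ f : X →ᵇ ℝ, ∫ x, f x ∂μ = m (f.compContinuous (orbMap G X x₀))) →
        ∀ s : Set X, MeasurableSet s →
          (∀ g : G, (fun x : X => g • x) ⁻¹' s = s) → μ s = 0 ∨ μ s = 1) :=
  bebutov_adjoint_surjective_and_extreme_to_ergodic_general hcont x₀ hx₀ hamen
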